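/- Let I and J be adjacent facets of a subword complex SC(Q,ρ) with I∖{i} = J∖{j}. Then j is the unique position in the complement of I such that r(I,j) ∈ {r(I,i), −r(I,i)}. Moreover, r(I,i) = r(I,j) is a positive root if i < j, while r(I,i) = −r(I,j) is a negative root if i > j. -/

import Mathlib

/-!
Put `H = I ∖ {i}`. Deleting from a word the letter at position `k` multiplies its product on
the left by the reflection `t_k` along the root `r(H, k)`; since the complements of `I` and `J`
both spell `ρ`, this gives `t_i = t_j`, i.e. `r(H, j) = ±r(H, i)`. Passing from `H` to `I`
leaves the roots up to position `i` unchanged and applies `t_i` to the later ones, and the signs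
are then forced by the positivity of the roots `s₁ ⋯ s_{k-1}(α_k)` of a reduced word. Uniqueness
holds because two letters of a reduced word with the same reflection could both be deleted
without changing the product.
-/

open scoped RealInnerProductSpace

variable {V : Type*} [NormedAddCommGroup V] [InnerProductSpace ℝ V] [FiniteDimensional ℝ V]

/-- The orthogonal reflection interchanging `v` and `-v` and fixing the hyperplane `v^⊥`
pointwise (reflection through the subspace `(ℝ∙v)ᗮ`). -/
noncomputable def reflAlong (v : V) : V ≃ₗᵢ[ℝ] V :=
  Submodule.reflection (Submodule.span ℝ {v})ᗮ

/-- A finite (essential) reflection group on a Euclidean vector space, together with a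
root system and a generic linear functional selecting the positive roots.  This is the
setting of a finite Coxeter system realized geometrically. -/
structure FiniteRootSystem (V : Type*) [NormedAddCommGroup V] [InnerProductSpace ℝ V]
    [FiniteDimensional ℝ V] where
  /-- The reflection group `W`, a subgroup of the orthogonal group. -/
  W : Subgroup (V ≃ₗᵢ[ℝ] V)
  /-- `W` is finite. -/
  finW : Finite W
  /-- The root system `Φ`. -/
  Φ : Set V
  ne_zero : ∀ β ∈ Φ, β ≠ 0
  /-- `Φ` is stable under the action of `W`. -/
  stable : ∀ w ∈ W, ∀ β ∈ Φ, w β ∈ Φ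
  /-- `Φ` contains two opposite roots orthogonal to each reflection hyperplane. -/
  neg_mem : ∀ β ∈ Φ, -β ∈ Φ
  smul_mem : ∀ β ∈ Φ, ∀ c : ℝ, c • β ∈ Φ → c = 1 ∨ c = -1
  refl_mem : ∀ β ∈ Φ, reflAlong β ∈ W
  refl_surj : ∀ g ∈ W, (∃ v : V, v ≠ 0 ∧ g = reflAlong v) → ∃ β ∈ Φ, g = reflAlong β
  /-- `W` is generated by the reflections along the roots. -/
  gen : W = Subgroup.closure {g | ∃ β ∈ Φ, g = reflAlong β}
  /-- The intersection of the reflecting hyperplanes is reduced to `0`. -/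
  essential : ∀ v : V, (∀ β ∈ Φ, ⟪β, v⟫ = 0) → v = 0
  /-- A linear functional not vanishing on any root, splitting `Φ` into positive and
  negative roots. -/
  f : V →ₗ[ℝ] ℝ
  f_ne : ∀ β ∈ Φ, f β ≠ 0

namespace FiniteRootSystem

variable (R : FiniteRootSystem V)

/-- The positive roots. -/
def PosRoots : Set V := {β ∈ R.Φ | 0 < R.f β}

/-- The negative roots. -/
def NegRoots : Set V := {β ∈ R.Φ | R.f β < 0}

/-- The cone generated by the positive roots. -/
def InPosCone (v : V) : Prop :=
  ∃ (s : Finset V) (c : V → ℝ), ↑s ⊆ R.PosRoots ∧ (∀ x ∈ s, 0 ≤ c x) ∧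
    v = ∑ x ∈ s, c x • x

/-- The simple roots: the roots lying on the extremal rays of the cone generated by the
positive roots. -/
def IsSimpleRoot (β : V) : Prop :=
  β ∈ R.PosRoots ∧
    ∀ x y : V, R.InPosCone x → R.InPosCone y → β = x + y → ∃ a : ℝ, 0 ≤ a ∧ x = a • β

/-- The inversion set `inv(w) = Φ⁺ ∩ w(Φ⁻)` of `w`: the positive roots sent to negative
roots by `w⁻¹`. -/
def invSet (w : V ≃ₗᵢ[ℝ] V) : Set V :=
  {β ∈ R.PosRoots | w.symm β ∈ R.NegRoots}

/-- The length of `w`: the smallest number of simple reflections needed to write `w`. -/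
noncomputable def len (w : V ≃ₗᵢ[ℝ] V) : ℕ :=
  sInf {n | ∃ L : List V, L.length = n ∧ (∀ β ∈ L, R.IsSimpleRoot β) ∧
    (L.map reflAlong).prod = w}

end FiniteRootSystem

section SubwordComplex

open FiniteRootSystem

variable {V : Type*} [NormedAddCommGroup V] [InnerProductSpace ℝ V] [FiniteDimensional ℝ V]

/-- The product of the reflections of the letters of the word `Q` at the positions in `X`,
taken in increasing order of positions. -/
noncomputable def prodQ {m : ℕ} (Q : Fin m → V) (X : Finset (Fin m)) : V ≃ₗᵢ[ℝ] V :=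
  ((X.sort (· ≤ ·)).map (fun k => reflAlong (Q k))).prod

/-- A facet of the subword complex `SC(Q, ρ)`: a set of positions whose complement forms
a reduced expression for `ρ` as a subword of `Q`.  Here the word `Q` is recorded by the
simple roots of its letters, the corresponding simple reflections being `reflAlong (Q k)`. -/
def IsSCFacet (R : FiniteRootSystem V) {m : ℕ} (Q : Fin m → V) (ρ : V ≃ₗᵢ[ℝ] V)
    (I : Finset (Fin m)) : Prop :=
  prodQ Q Iᶜ = ρ ∧ Iᶜ.card = R.len ρ

/-- The root function of a facet `I`: `r(I, k) = Π Q_{[k−1]∖I} (α_{q_k})`. -/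
noncomputable def rootf {m : ℕ} (Q : Fin m → V) (I : Finset (Fin m)) (k : Fin m) : V :=
  prodQ Q (Finset.univ.filter (fun x => x < k ∧ x ∉ I)) (Q k)

end SubwordComplex

section Reflections

variable {V : Type*} [NormedAddCommGroup V] [InnerProductSpace ℝ V]

theorem reflAlong_apply (v x : V) : reflAlong v x = x - (2 * ⟪v, x⟫ / ⟪v, v⟫) • v := by
  rw [reflAlong, Submodule.reflection_orthogonal_apply, Submodule.reflection_singleton_apply,
    real_inner_self_eq_norm_sq, neg_sub]
  simp only [RCLike.ofReal_real_eq_id, id_eq]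
  module

theorem reflAlong_self (v : V) : reflAlong v v = -v :=
  Submodule.reflection_orthogonalComplement_singleton_eq_neg v

theorem reflAlong_mul_self (v : V) : reflAlong v * reflAlong v = 1 := by
  ext x
  exact Submodule.reflection_reflection (Submodule.span ℝ {v})ᗮ x

theorem reflAlong_neg (v : V) : reflAlong (-v) = reflAlong v := by
  simp only [reflAlong, ← Set.neg_singleton, Submodule.span_neg]

theorem reflAlong_eq_of_eq_or_eq_neg {u v : V} (h : u = v ∨ u = -v) :
    reflAlong u = reflAlong v := by
  rcases h with rfl | rfl
  exacts [rfl, reflAlong_neg v]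

theorem reflAlong_conj (g : V ≃ₗᵢ[ℝ] V) (v : V) :
    reflAlong (g v) = g * reflAlong v * g⁻¹ := by
  ext x
  change reflAlong (g v) x = g (reflAlong v (g.symm x))
  rw [reflAlong_apply, reflAlong_apply, map_sub, map_smul, g.apply_symm_apply,
    ← g.inner_map_map v (g.symm x), g.apply_symm_apply, g.inner_map_map v v]

theorem exists_eq_smul_of_reflAlong_eq {v w : V} (h : reflAlong v = reflAlong w) :
    ∃ c : ℝ, w = c • v := by
  have hw := reflAlong_apply v w
  rw [h, reflAlong_self] at hw
  exact ⟨⟪v, w⟫ / ⟪v, v⟫, by linear_combination (norm := module) (-1 / 2 : ℝ) • hw⟩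

end Reflections

namespace FiniteRootSystem

variable (R : FiniteRootSystem V)

theorem neg_mem_negRoots {β : V} (h : β ∈ R.PosRoots) : -β ∈ R.NegRoots :=
  ⟨R.neg_mem β h.1, by rw [map_neg]; linarith [h.2]⟩

theorem eq_or_eq_neg_of_reflAlong_eq {β γ : V} (hβ : β ∈ R.Φ) (hγ : γ ∈ R.Φ)
    (h : reflAlong β = reflAlong γ) : γ = β ∨ γ = -β := by
  obtain ⟨c, rfl⟩ := exists_eq_smul_of_reflAlong_eq h
  rcases R.smul_mem β hβ c hγ with rfl | rfl
  exacts [Or.inl (one_smul ℝ β), Or.inr (neg_one_smul ℝ β)]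

theorem inPosCone_smul {β : V} (hβ : β ∈ R.PosRoots) {c : ℝ} (hc : 0 ≤ c) :
    R.InPosCone (c • β) :=
  ⟨{β}, fun _ => c, by simpa using hβ, fun _ _ => hc, by simp⟩

theorem reflAlong_mem_posRoots {α β : V} (hα : R.IsSimpleRoot α) (hβ : β ∈ R.PosRoots)
    (hne : β ≠ α) : reflAlong α β ∈ R.PosRoots := by
  have hγ : reflAlong α β ∈ R.Φ := R.stable _ (R.refl_mem α hα.1.1) β hβ.1
  refine ⟨hγ, lt_of_not_ge fun hγneg => hne ?_⟩
  replace hγneg : R.f (reflAlong α β) < 0 := lt_of_le_of_ne hγneg (R.f_ne _ hγ)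
  set c : ℝ := 2 * ⟪α, β⟫ / ⟪α, α⟫
  have hβγ : β - reflAlong α β = c • α := by rw [reflAlong_apply]; abel
  have hc : 0 < c := by
    have hf : c * R.f α = R.f β - R.f (reflAlong α β) := by
      rw [← smul_eq_mul, ← map_smul, ← hβγ, map_sub]
    nlinarith [hβ.2, hα.1.2]
  -- `c • α = β + (-s_α β)` splits `α` in the positive cone, and `α` is extremal there.
  have hsum : α = c⁻¹ • β + c⁻¹ • -reflAlong α β := by
    rw [← smul_add, ← sub_eq_add_neg, hβγ, inv_smul_smul₀ hc.ne']
  have hneg : -reflAlong α β ∈ R.PosRoots :=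
    ⟨R.neg_mem _ hγ, by rw [map_neg]; linarith⟩
  obtain ⟨a, ha, hβa⟩ := hα.2 _ _ (R.inPosCone_smul hβ (inv_nonneg.2 hc.le))
    (R.inPosCone_smul hneg (inv_nonneg.2 hc.le)) hsum
  rw [inv_smul_eq_iff₀ hc.ne', smul_smul] at hβa
  rcases R.smul_mem α hα.1.1 (c * a) (hβa ▸ hβ.1) with h | h
  · rw [hβa, h, one_smul]
  · nlinarith

end FiniteRootSystem

section Words

variable {V : Type*} [NormedAddCommGroup V] [InnerProductSpace ℝ V]

noncomputable def wordProd (L : List V) : V ≃ₗᵢ[ℝ] V := (L.map reflAlong).prod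

@[simp]
theorem wordProd_nil : wordProd ([] : List V) = 1 := rfl

@[simp]
theorem wordProd_cons (α : V) (L : List V) : wordProd (α :: L) = reflAlong α * wordProd L := by
  simp [wordProd]

@[simp]
theorem wordProd_append (L M : List V) : wordProd (L ++ M) = wordProd L * wordProd M := by
  simp [wordProd]

end Words

namespace FiniteRootSystem

variable (R : FiniteRootSystem V)

def IsReducedWord (L : List V) : Prop :=
  (∀ β ∈ L, R.IsSimpleRoot β) ∧ R.len (wordProd L) = L.length

variable {R}

theorem len_wordProd_le {L : List V} (hL : ∀ β ∈ L, R.IsSimpleRoot β) :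
    R.len (wordProd L) ≤ L.length :=
  Nat.sInf_le ⟨L, rfl, hL, rfl⟩

theorem exists_length_eq_len {L : List V} (hL : ∀ β ∈ L, R.IsSimpleRoot β) :
    ∃ M : List V, M.length = R.len (wordProd L) ∧ (∀ β ∈ M, R.IsSimpleRoot β) ∧
      wordProd M = wordProd L :=
  Nat.sInf_mem (s := {n | ∃ M : List V, M.length = n ∧ (∀ β ∈ M, R.IsSimpleRoot β) ∧
    (M.map reflAlong).prod = wordProd L}) ⟨L.length, L, rfl, hL, rfl⟩

theorem IsReducedWord.of_isInfix {L M : List V} (hL : R.IsReducedWord L) (hML : M <:+: L) :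
    R.IsReducedWord M := by
  obtain ⟨L₁, L₃, rfl⟩ := hML
  have hM : ∀ β ∈ M, R.IsSimpleRoot β := fun β hβ => hL.1 β (by simp [hβ])
  refine ⟨hM, le_antisymm (len_wordProd_le hM) (not_lt.1 fun hlt => ?_)⟩
  obtain ⟨M', hM'len, hM', hM'prod⟩ := exists_length_eq_len hM
  have hsimple : ∀ β ∈ L₁ ++ M' ++ L₃, R.IsSimpleRoot β := by
    intro β hβ
    simp only [List.mem_append] at hβ
    rcases hβ with (hβ | hβ) | hβ
    exacts [hL.1 β (by simp [hβ]), hM' β hβ, hL.1 β (by simp [hβ])]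
  have hle := len_wordProd_le hsimple
  simp only [wordProd_append, hM'prod, List.length_append] at hle
  have hlen := hL.2
  simp only [wordProd_append, List.length_append] at hlen
  omega

theorem IsReducedWord.wordProd_apply_mem_posRoots {α : V} :
    ∀ {L : List V}, R.IsReducedWord (L ++ [α]) → wordProd L α ∈ R.PosRoots
  | [], h => by simpa using (h.1 α (by simp)).1
  | β :: L, h => by
    have hL : R.IsReducedWord (L ++ [α]) := h.of_isInfix (List.suffix_cons β _).isInfix
    have hγ := hL.wordProd_apply_mem_posRoots
    rw [wordProd_cons, LinearIsometryEquiv.coe_mul, Function.comp_apply]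
    refine R.reflAlong_mem_posRoots (h.1 β (by simp)) hγ fun hγβ => ?_
    -- If `wordProd L α = β`, then `s_β · wordProd L · s_α = wordProd L` has a shorter word.
    have hprod : wordProd ((β :: L) ++ [α]) = wordProd L := by
      simp only [List.cons_append, wordProd_cons, wordProd_append, wordProd_nil, mul_one]
      rw [← hγβ, reflAlong_conj, mul_assoc, mul_assoc, inv_mul_cancel_left, reflAlong_mul_self,
        mul_one]
    have hle := len_wordProd_le (L := L) fun δ hδ => hL.1 δ (by simp [hδ])
    have hlen := h.2
    rw [hprod] at hlen
    simp only [List.cons_append, List.length_cons, List.length_append] at hlen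
    omega

end FiniteRootSystem

section Sorting

variable {α : Type*} [LinearOrder α]

theorem sort_eq_sort_filter_lt_append (X : Finset α) (k : α) :
    X.sort (· ≤ ·) =
      (X.filter (· < k)).sort (· ≤ ·) ++ (X.filter (k ≤ ·)).sort (· ≤ ·) := by
  refine List.Perm.eq_of_pairwise' (Finset.pairwise_sort _ _) ?_ ?_
  · refine List.pairwise_append.2 ⟨Finset.pairwise_sort _ _, Finset.pairwise_sort _ _, ?_⟩
    intro a ha b hb
    rw [Finset.mem_sort, Finset.mem_filter] at ha hb
    exact (ha.2.trans_le hb.2).le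
  · rw [← Multiset.coe_eq_coe, ← Multiset.coe_add, Finset.sort_eq, Finset.sort_eq,
      Finset.sort_eq, Finset.filter_val, Finset.filter_val]
    simp_rw [← not_lt]
    exact (Multiset.filter_add_not _ _).symm

theorem sort_filter_le_of_mem {X : Finset α} {k : α} (hk : k ∈ X) :
    (X.filter (k ≤ ·)).sort (· ≤ ·) = k :: (X.filter (k < ·)).sort (· ≤ ·) := by
  have hX : X.filter (k ≤ ·) = insert k (X.filter (k < ·)) := by
    ext x
    simp only [Finset.mem_filter, Finset.mem_insert, le_iff_eq_or_lt]
    constructor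
    · rintro ⟨hx, rfl | hlt⟩
      exacts [Or.inl rfl, Or.inr ⟨hx, hlt⟩]
    · rintro (rfl | ⟨hx, hlt⟩)
      exacts [⟨hk, Or.inl rfl⟩, ⟨hx, Or.inr hlt⟩]
  rw [hX, Finset.sort_insert]
  · exact fun b hb => (Finset.mem_filter.1 hb).2.le
  · simp

end Sorting

section Positions

variable {V : Type*} [NormedAddCommGroup V] [InnerProductSpace ℝ V] {m : ℕ} (Q : Fin m → V)

theorem prodQ_eq_wordProd (X : Finset (Fin m)) :
    prodQ Q X = wordProd ((X.sort (· ≤ ·)).map Q) := by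
  rw [prodQ, wordProd, List.map_map]
  rfl

theorem prodQ_eq_mul (X : Finset (Fin m)) (k : Fin m) :
    prodQ Q X = prodQ Q (X.filter (· < k)) * prodQ Q (X.filter (k ≤ ·)) := by
  rw [prodQ_eq_wordProd, sort_eq_sort_filter_lt_append X k, List.map_append, wordProd_append,
    prodQ_eq_wordProd, prodQ_eq_wordProd]

theorem prodQ_eq_mul_reflAlong_mul {X : Finset (Fin m)} {k : Fin m} (hk : k ∈ X) :
    prodQ Q X = prodQ Q (X.filter (· < k)) * reflAlong (Q k) * prodQ Q (X.filter (k < ·)) := by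
  rw [prodQ_eq_mul Q X k, mul_assoc, prodQ_eq_wordProd Q (X.filter (k ≤ ·)),
    sort_filter_le_of_mem hk, List.map_cons, wordProd_cons, ← prodQ_eq_wordProd]

theorem prodQ_erase {X : Finset (Fin m)} {k : Fin m} (hk : k ∈ X) :
    prodQ Q (X.erase k) = reflAlong (prodQ Q (X.filter (· < k)) (Q k)) * prodQ Q X := by
  have hlt : (X.erase k).filter (· < k) = X.filter (· < k) := by
    rw [Finset.filter_erase, Finset.erase_eq_of_notMem (by simp)]
  have hle : (X.erase k).filter (k ≤ ·) = X.filter (k < ·) := by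
    ext x
    simp only [Finset.mem_filter, Finset.mem_erase, lt_iff_le_and_ne]
    tauto
  rw [prodQ_eq_mul Q _ k, hlt, hle, prodQ_eq_mul_reflAlong_mul Q hk, reflAlong_conj]
  simp only [mul_assoc, inv_mul_cancel_left, ← mul_assoc (reflAlong (Q k)), reflAlong_mul_self,
    one_mul]

theorem rootf_eq_prodQ (I : Finset (Fin m)) (k : Fin m) :
    rootf Q I k = prodQ Q (Iᶜ.filter (· < k)) (Q k) := by
  rw [rootf]
  congr 2
  ext x
  simp only [Finset.mem_filter, Finset.mem_univ, Finset.mem_compl, true_and]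
  exact and_comm

theorem rootf_insert_of_le {H : Finset (Fin m)} {a k : Fin m} (hk : k ≤ a) :
    rootf Q (insert a H) k = rootf Q H k := by
  rw [rootf_eq_prodQ, rootf_eq_prodQ, Finset.compl_insert, Finset.filter_erase,
    Finset.erase_eq_of_notMem (by simp [hk])]

theorem rootf_insert_of_lt {H : Finset (Fin m)} {a k : Fin m} (ha : a ∉ H) (hk : a < k) :
    rootf Q (insert a H) k = reflAlong (rootf Q H a) (rootf Q H k) := by
  have hmem : a ∈ Hᶜ.filter (· < k) := Finset.mem_filter.2 ⟨Finset.mem_compl.2 ha, hk⟩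
  have hpre : (Hᶜ.filter (· < k)).filter (· < a) = Hᶜ.filter (· < a) := by
    rw [Finset.filter_filter]
    exact Finset.filter_congr fun x _ => and_iff_right_of_imp fun hx => hx.trans hk
  rw [rootf_eq_prodQ, rootf_eq_prodQ, rootf_eq_prodQ, Finset.compl_insert, Finset.filter_erase,
    prodQ_erase Q hmem, hpre]
  rfl

theorem prodQ_compl_insert {I : Finset (Fin m)} {k : Fin m} (hk : k ∉ I) :
    prodQ Q (insert k I)ᶜ = reflAlong (rootf Q I k) * prodQ Q Iᶜ := by
  rw [Finset.compl_insert, prodQ_erase Q (Finset.mem_compl.2 hk), rootf_eq_prodQ]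

theorem reflAlong_rootf_eq_of_prodQ_eq {H : Finset (Fin m)} {a b : Fin m} (ha : a ∉ H)
    (hb : b ∉ H) (h : prodQ Q (insert a H)ᶜ = prodQ Q (insert b H)ᶜ) :
    reflAlong (rootf Q H a) = reflAlong (rootf Q H b) := by
  rw [prodQ_compl_insert Q ha, prodQ_compl_insert Q hb] at h
  exact mul_right_cancel h

end Positions

section Facets

variable (R : FiniteRootSystem V) {m : ℕ} {Q : Fin m → V}

theorem prodQ_mem_W (hQ : ∀ k, Q k ∈ R.Φ) (X : Finset (Fin m)) : prodQ Q X ∈ R.W :=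
  Subgroup.list_prod_mem _ fun g hg => by
    obtain ⟨k, -, rfl⟩ := List.mem_map.1 hg
    exact R.refl_mem _ (hQ k)

theorem rootf_mem_Φ (hQ : ∀ k, Q k ∈ R.Φ) (I : Finset (Fin m)) (k : Fin m) :
    rootf Q I k ∈ R.Φ :=
  R.stable _ (prodQ_mem_W R hQ _) _ (hQ k)

theorem len_prodQ_le (hQ : ∀ k, R.IsSimpleRoot (Q k)) (X : Finset (Fin m)) :
    R.len (prodQ Q X) ≤ X.card := by
  rw [prodQ_eq_wordProd]
  simpa using R.len_wordProd_le (L := (X.sort (· ≤ ·)).map Q) (by simp [hQ])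

variable {R} {ρ : V ≃ₗᵢ[ℝ] V} {I : Finset (Fin m)}

theorem IsSCFacet.isReducedWord (hQ : ∀ k, R.IsSimpleRoot (Q k)) (hI : IsSCFacet R Q ρ I) :
    R.IsReducedWord ((Iᶜ.sort (· ≤ ·)).map Q) :=
  ⟨by simp [hQ],
    by rw [← prodQ_eq_wordProd, hI.1, ← hI.2, List.length_map, Finset.length_sort]⟩

theorem IsSCFacet.rootf_mem_posRoots (hQ : ∀ k, R.IsSimpleRoot (Q k)) (hI : IsSCFacet R Q ρ I)
    {k : Fin m} (hk : k ∉ I) : rootf Q I k ∈ R.PosRoots := by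
  have hpre :
      ((Iᶜ.filter (· < k)).sort (· ≤ ·)).map Q ++ [Q k] <+: (Iᶜ.sort (· ≤ ·)).map Q := by
    rw [sort_eq_sort_filter_lt_append Iᶜ k, sort_filter_le_of_mem (Finset.mem_compl.2 hk)]
    simp
  rw [rootf_eq_prodQ, prodQ_eq_wordProd]
  exact ((hI.isReducedWord hQ).of_isInfix hpre.isInfix).wordProd_apply_mem_posRoots

theorem IsSCFacet.eq_of_reflAlong_rootf_eq (hQ : ∀ k, R.IsSimpleRoot (Q k))
    (hI : IsSCFacet R Q ρ I) {k l : Fin m} (hk : k ∉ I) (hl : l ∉ I)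
    (h : reflAlong (rootf Q I k) = reflAlong (rootf Q I l)) : k = l := by
  wlog hkl : k < l generalizing k l
  · rcases (not_lt.1 hkl).eq_or_lt with hlk | hlk
    exacts [hlk.symm, (this hl hk h.symm hlk).symm]
  -- Deleting the letters at `l` and then at `k` multiplies `ρ` by `t_l` and then by `t_k = t_l`,
  -- so a word two letters shorter still spells `ρ`.
  have hkI : k ∉ insert l I := by simp [hk, hkl.ne]
  have hprod : prodQ Q (insert k (insert l I))ᶜ = ρ := by
    rw [prodQ_compl_insert Q hkI, prodQ_compl_insert Q hl, rootf_insert_of_le Q hkl.le, h,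
      ← mul_assoc, reflAlong_mul_self, one_mul, hI.1]
  have hcard : (insert k (insert l I))ᶜ.card + 2 = Iᶜ.card := by
    have hk' := Finset.card_erase_add_one (s := Iᶜ.erase l) (a := k) (by simp [hk, hkl.ne])
    have hl' := Finset.card_erase_add_one (s := Iᶜ) (a := l) (by simpa using hl)
    rw [Finset.compl_insert, Finset.compl_insert]
    omega
  have hle := len_prodQ_le R hQ (insert k (insert l I))ᶜ
  rw [hprod, ← hI.2] at hle
  omega

end Facets

theorem rootf_flip_of_lt (R : FiniteRootSystem V) {m : ℕ} {Q : Fin m → V}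
    (hQ : ∀ k, R.IsSimpleRoot (Q k)) {ρ : V ≃ₗᵢ[ℝ] V} {H : Finset (Fin m)} {a b : Fin m}
    (ha : a ∉ H) (hb : b ∉ H) (hab : a < b)
    (hA : IsSCFacet R Q ρ (insert a H)) (hB : IsSCFacet R Q ρ (insert b H)) :
    rootf Q (insert a H) b = rootf Q (insert a H) a ∧
      rootf Q (insert b H) a = rootf Q (insert a H) a ∧
      rootf Q (insert b H) b = -rootf Q (insert a H) a ∧
      rootf Q (insert a H) a ∈ R.PosRoots := by
  have hQΦ : ∀ k, Q k ∈ R.Φ := fun k => (hQ k).1.1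
  have hrefl := reflAlong_rootf_eq_of_prodQ_eq Q ha hb (hA.1.trans hB.1.symm)
  have hAa : rootf Q (insert a H) a = rootf Q H a := rootf_insert_of_le Q le_rfl
  have hBa : rootf Q (insert b H) a = rootf Q H a := rootf_insert_of_le Q hab.le
  have hBb : rootf Q (insert b H) b = rootf Q H b := rootf_insert_of_le Q le_rfl
  have hAb : rootf Q (insert a H) b = -rootf Q H b := by
    rw [rootf_insert_of_lt Q ha hab, hrefl, reflAlong_self]
  have hApos : rootf Q (insert a H) a ∈ R.PosRoots := by
    rw [hAa, ← hBa]
    exact hB.rootf_mem_posRoots hQ (by simp [ha, hab.ne])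
  have hAbpos : rootf Q (insert a H) b ∈ R.PosRoots :=
    hA.rootf_mem_posRoots hQ (by simp [hb, hab.ne'])
  have hHb : rootf Q H b = -rootf Q H a := by
    rcases R.eq_or_eq_neg_of_reflAlong_eq (rootf_mem_Φ R hQΦ H a) (rootf_mem_Φ R hQΦ H b)
      hrefl with h | h
    · have hf := hAbpos.2
      rw [hAb, h, ← hAa, map_neg] at hf
      linarith [hApos.2]
    · exact h
  refine ⟨by rw [hAb, hHb, neg_neg, hAa], by rw [hBa, hAa], by rw [hBb, hHb, hAa], hApos⟩

open FiniteRootSystem in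
theorem rootf_flip_general
    {V : Type*} [NormedAddCommGroup V] [InnerProductSpace ℝ V] [FiniteDimensional ℝ V]
    (R : FiniteRootSystem V) {m : ℕ} (Q : Fin m → V) (hQ : ∀ k, R.IsSimpleRoot (Q k))
    (ρ : V ≃ₗᵢ[ℝ] V)
    (I J : Finset (Fin m)) (hI : IsSCFacet R Q ρ I) (hJ : IsSCFacet R Q ρ J)
    (i j : Fin m) (hi : i ∈ I) (hj : j ∈ J) (hij : I.erase i = J.erase j) (hne : I ≠ J) :
    (j ∉ I ∧ (rootf Q I j = rootf Q I i ∨ rootf Q I j = -rootf Q I i) ∧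
      ∀ k : Fin m, k ∉ I →
        (rootf Q I k = rootf Q I i ∨ rootf Q I k = -rootf Q I i) → k = j) ∧
    (i < j → rootf Q I i = rootf Q I j ∧ rootf Q I i ∈ R.PosRoots) ∧
    (j < i → rootf Q I i = -rootf Q I j ∧ rootf Q I i ∈ R.NegRoots) := by
  obtain ⟨H, hiH, hjH, rfl, rfl⟩ : ∃ H, i ∉ H ∧ j ∉ H ∧ I = insert i H ∧ J = insert j H :=
    ⟨I.erase i, I.notMem_erase i, hij ▸ J.notMem_erase j, (I.insert_erase hi).symm,
      by rw [hij, J.insert_erase hj]⟩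
  have hij' : i ≠ j := by
    rintro rfl
    exact hne rfl
  have hjI : j ∉ insert i H := by simp [hij'.symm, hjH]
  have hlt : i < j → rootf Q (insert i H) i = rootf Q (insert i H) j ∧
      rootf Q (insert i H) i ∈ R.PosRoots := fun h => by
    obtain ⟨hji, -, -, hpos⟩ := rootf_flip_of_lt R hQ hiH hjH h hI hJ
    exact ⟨hji.symm, hpos⟩
  have hgt : j < i → rootf Q (insert i H) i = -rootf Q (insert i H) j ∧
      rootf Q (insert i H) i ∈ R.NegRoots := fun h => by
    obtain ⟨-, hj', hi', hpos⟩ := rootf_flip_of_lt R hQ hjH hiH h hJ hI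
    rw [hi', hj']
    exact ⟨rfl, R.neg_mem_negRoots hpos⟩
  have hpm : rootf Q (insert i H) j = rootf Q (insert i H) i ∨
      rootf Q (insert i H) j = -rootf Q (insert i H) i := by
    rcases hij'.lt_or_gt with h | h
    · exact Or.inl (hlt h).1.symm
    · exact Or.inr (by rw [(hgt h).1, neg_neg])
  refine ⟨⟨hjI, hpm, fun k hk hk' => hI.eq_of_reflAlong_rootf_eq hQ hk hjI ?_⟩, hlt, hgt⟩
  rw [reflAlong_eq_of_eq_or_eq_neg hk', reflAlong_eq_of_eq_or_eq_neg hpm]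

open FiniteRootSystem in
/-- For adjacent facets `I`, `J` with `I∖{i} = J∖{j}`: the position `j` is the unique
position in the complement of `I` with `r(I,j) = ±r(I,i)`; moreover
`r(I,i) = r(I,j) ∈ Φ⁺` if `i < j`, while `r(I,i) = −r(I,j) ∈ Φ⁻` if `i > j`. -/
theorem rootf_flip
    {V : Type*} [NormedAddCommGroup V] [InnerProductSpace ℝ V] [FiniteDimensional ℝ V]
    (R : FiniteRootSystem V) {m : ℕ} (Q : Fin m → V) (hQ : ∀ k, R.IsSimpleRoot (Q k))
    (ρ : V ≃ₗᵢ[ℝ] V) (hρ : ρ ∈ R.W)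
    (I J : Finset (Fin m)) (hI : IsSCFacet R Q ρ I) (hJ : IsSCFacet R Q ρ J)
    (i j : Fin m) (hi : i ∈ I) (hj : j ∈ J) (hij : I.erase i = J.erase j) (hne : I ≠ J) :
    (j ∉ I ∧ (rootf Q I j = rootf Q I i ∨ rootf Q I j = -rootf Q I i) ∧
      ∀ k : Fin m, k ∉ I →
        (rootf Q I k = rootf Q I i ∨ rootf Q I k = -rootf Q I i) → k = j) ∧
    (i < j → rootf Q I i = rootf Q I j ∧ rootf Q I i ∈ R.PosRoots) ∧
    (j < i → rootf Q I i = -rootf Q I j ∧ rootf Q I i ∈ R.NegRoots) :=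
  rootf_flip_general R Q hQ ρ I J hI hJ i j hi hj hij hne
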